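/- The syntactic reorderable part and Brzozowski reordering derivative compute their semantic counterparts: for every regular expression E over Σ and every word u, ⟦R_u E⟧ = R_u ⟦E⟧ and ⟦D_u E⟧ = D^I_u ⟦E⟧. -/

import Mathlib

open RegularExpression
open scoped Classical

universe u

variable {α : Type u}

/-- Two words are independent if every letter of the first is independent
of every letter of the second. -/
def WIndep (I : α → α → Prop) (u v : List α) : Prop :=
  ∀ a ∈ u, ∀ b ∈ v, I a b

/-- Trace equivalence: the least equivalence relation on words containing
all pairs (x ++ [a,b] ++ y, x ++ [b,a] ++ y) with a I b. -/
inductive TrEq (I : α → α → Prop) : List α → List α → Prop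
  | swap (x y : List α) {a b : α} : I a b → TrEq I (x ++ [a, b] ++ y) (x ++ [b, a] ++ y)
  | refl (u : List α) : TrEq I u u
  | symm {u v : List α} : TrEq I u v → TrEq I v u
  | trans {u v w : List α} : TrEq I u v → TrEq I v w → TrEq I u w

/-- Trace closure of a language. -/
def TrClosure (I : α → α → Prop) (L : Set (List α)) : Set (List α) :=
  {w | ∃ z ∈ L, TrEq I w z}

/-- u ⊲ z ⊳ v with exactly n blocks of u: there are nonempty words u₁,…,uₙ and
words v₀,…,vₙ (with v₁,…,v_{n-1} nonempty) such that u = u₁⋯uₙ, v = v₀⋯vₙ,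
z = v₀u₁v₁⋯uₙvₙ and vⱼ I uᵢ whenever j < i. -/
def ScatN (I : α → α → Prop) (n : ℕ) (u z v : List α) : Prop :=
  ∃ us vs : ℕ → List α,
    (∀ i, 1 ≤ i → i ≤ n → us i ≠ []) ∧
    (∀ j, 1 ≤ j → j ≤ n - 1 → vs j ≠ []) ∧
    u = ((List.range n).map (fun i => us (i + 1))).flatten ∧
    v = ((List.range (n + 1)).map vs).flatten ∧
    z = vs 0 ++ ((List.range n).map (fun i => us (i + 1) ++ vs (i + 1))).flatten ∧
    (∀ i j, 1 ≤ i → i ≤ n → j < i → WIndep I (vs j) (us i))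

/-- u ⊲ z ⊳ v -/
def Scat (I : α → α → Prop) (u z v : List α) : Prop :=
  ∃ n, ScatN I n u z v

/-- u ∼⊲ z ⊳ v -/
def EqScat (I : α → α → Prop) (u z v : List α) : Prop :=
  ∃ u', TrEq I u u' ∧ Scat I u' z v

/-- u ∼⊲ z ⊳∼ v -/
def EqScatEq (I : α → α → Prop) (u z v : List α) : Prop :=
  ∃ u' v', TrEq I u u' ∧ Scat I u' z v' ∧ TrEq I v' v

/-- u ∼⊲_N z ⊳∼ v : as EqScatEq, with the number of blocks bounded by N -/
def EqScatEqLe (I : α → α → Prop) (N : ℕ) (u z v : List α) : Prop :=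
  ∃ u' v', TrEq I u u' ∧ (∃ n ≤ N, ScatN I n u' z v') ∧ TrEq I v' v

/-- Reordering concatenation of words. -/
def rconc (I : α → α → Prop) : List α → List α → Set (List α)
  | [], v => {v}
  | a :: u, [] => {a :: u}
  | a :: u, b :: v =>
      (List.cons a) '' rconc I u (b :: v) ∪
      {z | WIndep I (a :: u) [b] ∧ ∃ w ∈ rconc I (a :: u) v, z = b :: w}
termination_by u v => u.length + v.length

/-- Reordering concatenation lifted to languages. -/
def rconcL (I : α → α → Prop) (L L' : Set (List α)) : Set (List α) :=
  {z | ∃ u ∈ L, ∃ v ∈ L', z ∈ rconc I u v}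

/-- The reorderable part of a language w.r.t. a word. -/
def RPart (I : α → α → Prop) (u : List α) (L : Set (List α)) : Set (List α) :=
  {v ∈ L | WIndep I v u}

/-- The reordering derivative of a language along a word. -/
def RDeriv (I : α → α → Prop) (u : List α) (L : Set (List α)) : Set (List α) :=
  {v | ∃ z ∈ L, EqScat I u z v}

/-- Syntactic reorderable part of a regexp w.r.t. a letter. -/
noncomputable def Rexp (I : α → α → Prop) (a : α) : RegularExpression α → RegularExpression α
  | zero => zero
  | epsilon => epsilon
  | char b => if I a b then char b else zero
  | plus E F => plus (Rexp I a E) (Rexp I a F)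
  | comp E F => comp (Rexp I a E) (Rexp I a F)
  | RegularExpression.star E => star (Rexp I a E)

/-- Brzozowski reordering derivative of a regexp along a letter. -/
noncomputable def Dexp (I : α → α → Prop) (a : α) : RegularExpression α → RegularExpression α
  | zero => zero
  | epsilon => zero
  | char b => if a = b then epsilon else zero
  | plus E F => plus (Dexp I a E) (Dexp I a F)
  | comp E F => plus (comp (Dexp I a E) F) (comp (Rexp I a E) (Dexp I a F))
  | RegularExpression.star E => comp (star (Rexp I a E)) (comp (Dexp I a E) (star E))

/-- Syntactic reorderable part along a word. -/
noncomputable def RexpW (I : α → α → Prop) (u : List α) (E : RegularExpression α) :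
    RegularExpression α :=
  u.foldl (fun E a => Rexp I a E) E

/-- Brzozowski reordering derivative along a word. -/
noncomputable def DexpW (I : α → α → Prop) (u : List α) (E : RegularExpression α) :
    RegularExpression α :=
  u.foldl (fun E a => Dexp I a E) E

/-- Antimirov reordering parts-of-derivatives along a letter. -/
inductive Antim (I : α → α → Prop) : RegularExpression α → α → RegularExpression α → Prop
  | chr (a : α) : Antim I (char a) a epsilon
  | plusL {E F : RegularExpression α} {a E'} : Antim I E a E' → Antim I (plus E F) a E'
  | plusR {E F : RegularExpression α} {a F'} : Antim I F a F' → Antim I (plus E F) a F'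
  | compL {E F : RegularExpression α} {a E'} : Antim I E a E' → Antim I (comp E F) a (comp E' F)
  | compR {E F : RegularExpression α} {a F'} :
      Antim I F a F' → Antim I (comp E F) a (comp (Rexp I a E) F')
  | st {E : RegularExpression α} {a E'} :
      Antim I E a E' → Antim I (star E) a (comp (star (Rexp I a E)) (comp E' (star E)))

/-- Antimirov reordering parts-of-derivatives along a word. -/
inductive AntimW (I : α → α → Prop) : RegularExpression α → List α → RegularExpression α → Prop
  | nil (E : RegularExpression α) : AntimW I E [] E
  | snoc {E : RegularExpression α} {u E' a E''} :
      AntimW I E u E' → Antim I E' a E'' → AntimW I E (u ++ [a]) E''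

/-- The dependence graph of a word: vertices are positions; distinct positions
are adjacent when their letters are not independent. -/
def depGraph (I : α → α → Prop) (w : List α) : SimpleGraph (Fin w.length) where
  Adj i j := i ≠ j ∧ ¬(I (w.get i) (w.get j) ∧ I (w.get j) (w.get i))
  symm := by
    constructor
    intro i j h
    exact ⟨h.1.symm, fun hc => h.2 ⟨hc.2, hc.1⟩⟩
  loopless := by
    constructor
    intro i h
    exact h.1 rfl

/-- A word is connected if its dependence graph is connected. -/
def WordConnected (I : α → α → Prop) (w : List α) : Prop :=
  (depGraph I w).Preconnected

/-- Least fixed point star for the trace-closing semantics. -/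
def starI (I : α → α → Prop) (L : Set (List α)) : Set (List α) :=
  sInf {X | {([] : List α)} ∪ rconcL I L X ⊆ X}

/-- Trace-closing semantics of regular expressions. -/
def langI (I : α → α → Prop) : RegularExpression α → Set (List α)
  | zero => ∅
  | epsilon => {[]}
  | char a => {[a]}
  | plus E F => langI I E ∪ langI I F
  | comp E F => rconcL I (langI I E) (langI I F)
  | RegularExpression.star E => starI I (langI I E)

/-- L has (scattering) rank at most N. -/
def HasRankLe (I : α → α → Prop) (L : Set (List α)) (N : ℕ) : Prop :=
  ∀ u v, u ++ v ∈ TrClosure I L → ∃ z ∈ L, EqScatEqLe I N u z v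

/-- L has uniform (scattering) rank at most N. -/
def HasUniformRankLe (I : α → α → Prop) (L : Set (List α)) (N : ℕ) : Prop :=
  ∀ w ∈ TrClosure I L, ∃ z ∈ L, ∀ u v, w = u ++ v → EqScatEqLe I N u z v

/-- Star-connected regular expressions. -/
inductive StarConnected (I : α → α → Prop) : RegularExpression α → Prop
  | zero : StarConnected I zero
  | epsilon : StarConnected I epsilon
  | chr (a : α) : StarConnected I (char a)
  | plus {E F : RegularExpression α} :
      StarConnected I E → StarConnected I F → StarConnected I (plus E F)
  | comp {E F : RegularExpression α} :
      StarConnected I E → StarConnected I F → StarConnected I (comp E F)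
  | st {E : RegularExpression α} :
      StarConnected I E → (∀ w ∈ E.matches', WordConnected I w) → StarConnected I (star E)

/-- Refined Antimirov reordering parts-of-derivatives along a letter. -/
inductive RAntim (I : α → α → Prop) :
    RegularExpression α → α → RegularExpression α → RegularExpression α → Prop
  | chr (a : α) : RAntim I (char a) a epsilon epsilon
  | plusL {E F : RegularExpression α} {a El Er} :
      RAntim I E a El Er → RAntim I (plus E F) a El Er
  | plusR {E F : RegularExpression α} {a Fl Fr} :
      RAntim I F a Fl Fr → RAntim I (plus E F) a Fl Fr
  | compL {E F : RegularExpression α} {a El Er} :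
      RAntim I E a El Er → RAntim I (comp E F) a El (comp Er F)
  | compR {E F : RegularExpression α} {a Fl Fr} :
      RAntim I F a Fl Fr → RAntim I (comp E F) a (comp (Rexp I a E) Fl) Fr
  | st {E : RegularExpression α} {a El Er} :
      RAntim I E a El Er →
      RAntim I (star E) a (comp (star (Rexp I a E)) El) (comp Er (star E))

/-- Refined Antimirov relation lifted to nonempty lists of regexps (unbounded). -/
inductive RAntimL (I : α → α → Prop) :
    List (RegularExpression α) → α → List (RegularExpression α) → Prop
  | split {Γ Δ : List (RegularExpression α)} {E : RegularExpression α} {a El Er} :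
      RAntim I E a El Er →
      RAntimL I (Γ ++ E :: Δ) a (Γ.map (Rexp I a) ++ El :: Er :: Δ)
  | dropL {Γ Δ : List (RegularExpression α)} {E : RegularExpression α} {a El Er} :
      RAntim I E a El Er → [] ∈ El.matches' → Γ ≠ [] →
      RAntimL I (Γ ++ E :: Δ) a (Γ.map (Rexp I a) ++ Er :: Δ)
  | dropR {Γ Δ : List (RegularExpression α)} {E : RegularExpression α} {a El Er} :
      RAntim I E a El Er → [] ∈ Er.matches' → Δ ≠ [] →
      RAntimL I (Γ ++ E :: Δ) a (Γ.map (Rexp I a) ++ El :: Δ)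
  | dropBoth {Γ Δ : List (RegularExpression α)} {E : RegularExpression α} {a El Er} :
      RAntim I E a El Er → [] ∈ El.matches' → [] ∈ Er.matches' → Γ ≠ [] → Δ ≠ [] →
      RAntimL I (Γ ++ E :: Δ) a (Γ.map (Rexp I a) ++ Δ)

/-- Refined Antimirov relation along a word (unbounded). -/
inductive RAntimW (I : α → α → Prop) :
    RegularExpression α → List α → List (RegularExpression α) → Prop
  | nil (E : RegularExpression α) : RAntimW I E [] [E]
  | snoc {E : RegularExpression α} {u Γ a Γ'} :
      RAntimW I E u Γ → RAntimL I Γ a Γ' → RAntimW I E (u ++ [a]) Γ'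

/-- N-bounded refined Antimirov relation lifted to nonempty lists of regexps. -/
inductive RAntimLN (I : α → α → Prop) (N : ℕ) :
    List (RegularExpression α) → α → List (RegularExpression α) → Prop
  | split {Γ Δ : List (RegularExpression α)} {E : RegularExpression α} {a El Er} :
      RAntim I E a El Er → Γ.length + Δ.length < N →
      RAntimLN I N (Γ ++ E :: Δ) a (Γ.map (Rexp I a) ++ El :: Er :: Δ)
  | dropL {Γ Δ : List (RegularExpression α)} {E : RegularExpression α} {a El Er} :
      RAntim I E a El Er → [] ∈ El.matches' → Γ ≠ [] →
      RAntimLN I N (Γ ++ E :: Δ) a (Γ.map (Rexp I a) ++ Er :: Δ)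
  | dropR {Γ Δ : List (RegularExpression α)} {E : RegularExpression α} {a El Er} :
      RAntim I E a El Er → [] ∈ Er.matches' → Δ ≠ [] →
      RAntimLN I N (Γ ++ E :: Δ) a (Γ.map (Rexp I a) ++ El :: Δ)
  | dropBoth {Γ Δ : List (RegularExpression α)} {E : RegularExpression α} {a El Er} :
      RAntim I E a El Er → [] ∈ El.matches' → [] ∈ Er.matches' → Γ ≠ [] → Δ ≠ [] →
      RAntimLN I N (Γ ++ E :: Δ) a (Γ.map (Rexp I a) ++ Δ)

/-- N-bounded refined Antimirov relation along a word. -/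
inductive RAntimWN (I : α → α → Prop) (N : ℕ) :
    RegularExpression α → List α → List (RegularExpression α) → Prop
  | nil (E : RegularExpression α) : RAntimWN I N E [] [E]
  | snoc {E : RegularExpression α} {u Γ a Γ'} :
      RAntimWN I N E u Γ → RAntimLN I N Γ a Γ' → RAntimWN I N E (u ++ [a]) Γ'

/-!
Both identities reduce to a single letter: `R_{ua} = R_a ∘ R_u` and `D_{ua} = D_a ∘ D_u` hold for
the syntactic operators by definition, and for the semantic ones as well. For the reorderable part
this is immediate. For the derivative, `u ⊲ z ⊳ v` is read as an interleaving of `u` and `v`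
built one letter at a time. A word trace equivalent to `u a` contains an occurrence of `a` that
commutes with everything after it; inside an interleaving this occurrence can be moved from the
`u`-side to the `v`-side and back, which gives `D^I_{ua} L = D^I_a (D^I_u L)`. Finally `D^I_a L`
consists of the words `v₀ v₁` with `v₀ a v₁ ∈ L` and `v₀ I a`, and this description satisfies the
Brzozowski clauses, by structural induction on `E`.
-/

section

variable {I : α → α → Prop}

lemma List.flatten_map_range_succ (f : ℕ → List α) (n : ℕ) :
    ((List.range (n + 1)).map f).flatten
      = f 0 ++ ((List.range n).map fun i => f (i + 1)).flatten := by
  rw [List.range_succ_eq_map, List.map_cons, List.flatten_cons, List.map_map]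
  rfl

lemma List.append_eq_append_cons_iff {x y v₀ v₁ : List α} {a : α} :
    x ++ y = v₀ ++ a :: v₁ ↔
      (∃ x₁, x = v₀ ++ a :: x₁ ∧ v₁ = x₁ ++ y) ∨ ∃ y₀, y = y₀ ++ a :: v₁ ∧ v₀ = x ++ y₀ := by
  rw [List.append_eq_append_iff]
  constructor
  · rintro (⟨y₀, rfl, hy⟩ | ⟨_ | ⟨b, x₁⟩, rfl, h⟩)
    · exact .inr ⟨y₀, hy, rfl⟩
    · exact .inr ⟨[], by simpa using h.symm, by simp⟩
    · obtain ⟨rfl, rfl⟩ := List.cons_eq_cons.1 h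
      exact .inl ⟨x₁, rfl, rfl⟩
  · rintro (⟨x₁, rfl, rfl⟩ | ⟨y₀, rfl, rfl⟩)
    · exact .inr ⟨a :: x₁, by simp, by simp⟩
    · exact .inl ⟨y₀, by simp, rfl⟩

lemma List.flatten_eq_append_cons {ws : List (List α)} {v₀ v₁ : List α} {a : α}
    (h : ws.flatten = v₀ ++ a :: v₁) :
    ∃ ws₁ w₀ w₁ ws₂, ws = ws₁ ++ (w₀ ++ a :: w₁) :: ws₂ ∧
      v₀ = ws₁.flatten ++ w₀ ∧ v₁ = w₁ ++ ws₂.flatten := by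
  induction ws generalizing v₀ with
  | nil => simp at h
  | cons w ws ih =>
    rw [List.flatten_cons, List.append_eq_append_cons_iff] at h
    rcases h with ⟨w₁, rfl, rfl⟩ | ⟨y₀, hy, rfl⟩
    · exact ⟨[], v₀, w₁, ws, by simp, by simp, rfl⟩
    · obtain ⟨ws₁, w₀, w₁, ws₂, rfl, rfl, rfl⟩ := ih hy
      exact ⟨w :: ws₁, w₀, w₁, ws₂, rfl, by simp, rfl⟩

lemma Language.mem_singleton {v w : List α} : v ∈ ({w} : Language α) ↔ v = w := Iff.rfl

@[simp] lemma wIndep_nil_left (w : List α) : WIndep I [] w := by simp [WIndep]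

@[simp] lemma wIndep_nil_right (w : List α) : WIndep I w [] := by simp [WIndep]

lemma wIndep_cons_left {a : α} {x w : List α} :
    WIndep I (a :: x) w ↔ WIndep I [a] w ∧ WIndep I x w := by
  simp [WIndep]

lemma WIndep.mono {x x' w w' : List α} (h : WIndep I x w) (hx : x' ⊆ x) (hw : w' ⊆ w) :
    WIndep I x' w' :=
  fun a ha b hb => h a (hx ha) b (hw hb)

lemma WIndep.symm (hsym : Symmetric I) {x w : List α} (h : WIndep I x w) : WIndep I w x :=
  fun b hb a ha => hsym (h a ha b hb)

@[simp] lemma wIndep_append_left {x y w : List α} :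
    WIndep I (x ++ y) w ↔ WIndep I x w ∧ WIndep I y w := by
  simp only [WIndep, List.mem_append, or_imp, forall_and]

@[simp] lemma wIndep_append_right {x y w : List α} :
    WIndep I w (x ++ y) ↔ WIndep I w x ∧ WIndep I w y := by
  simp only [WIndep, List.mem_append, or_imp, forall_and]

@[simp] lemma wIndep_flatten_left {ws : List (List α)} {w : List α} :
    WIndep I ws.flatten w ↔ ∀ x ∈ ws, WIndep I x w := by
  simp only [WIndep, List.mem_flatten]; aesop

lemma wIndep_singleton_left {a : α} {w : List α} : WIndep I [a] w ↔ ∀ b ∈ w, I a b := by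
  simp [WIndep]

/-- A letter-by-letter presentation of `u ⊲ z ⊳ v`: each letter of `z` is taken from `u` or
from `v`, and a letter taken from `v` must be independent of the rest of `u`. -/
inductive Scatter (I : α → α → Prop) : List α → List α → List α → Prop
  | nil (v : List α) : Scatter I [] v v
  | cons_left {u z v : List α} (a : α) : Scatter I u z v → Scatter I (a :: u) (a :: z) v
  | cons_right {u z v : List α} {b : α} :
      WIndep I [b] u → Scatter I u z v → Scatter I u (b :: z) (b :: v)

namespace Scatter

lemma append_left {u z v : List α} (w : List α) (h : Scatter I u z v) :
    Scatter I (w ++ u) (w ++ z) v := by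
  induction w with
  | nil => exact h
  | cons a w ih => exact cons_left a ih

lemma append_right {u z v : List α} (w : List α) (hw : WIndep I w u) (h : Scatter I u z v) :
    Scatter I u (w ++ z) (w ++ v) := by
  induction w with
  | nil => exact h
  | cons b w ih =>
    rw [wIndep_cons_left] at hw
    exact cons_right hw.1 (ih hw.2)

lemma eq_of_left_nil {z v : List α} (h : Scatter I [] z v) : z = v := by
  generalize hu : ([] : List α) = u at h
  induction h with
  | nil => rfl
  | cons_left => simp at hu
  | cons_right _ _ ih => rw [ih hu]

end Scatter

lemma Scatter.of_scatN : ∀ {n : ℕ} {u z v : List α}, ScatN I n u z v → Scatter I u z v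
  | 0, u, z, v, ⟨us, vs, _, _, hu, hv, hz, _⟩ => by
    simp only [List.range_zero, List.map_nil, List.flatten_nil, List.append_nil,
      List.flatten_map_range_succ] at hu hv hz
    subst hu hv hz
    exact .nil _
  | n + 1, u, z, v, ⟨us, vs, hune, hvne, hu, hv, hz, hind⟩ => by
    have htail : Scatter I (((List.range n).map fun i => us (i + 2)).flatten)
        (vs 1 ++ ((List.range n).map fun i => us (i + 2) ++ vs (i + 2)).flatten)
        (((List.range (n + 1)).map fun j => vs (j + 1)).flatten) :=
      Scatter.of_scatN ⟨fun i => us (i + 1), fun j => vs (j + 1),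
        fun i h1 h2 => hune (i + 1) (by omega) (by omega),
        fun j h1 h2 => hvne (j + 1) (by omega) (by omega),
        rfl, rfl, rfl,
        fun i j h1 h2 hji => hind (i + 1) (j + 1) (by omega) (by omega) (by omega)⟩
    have hhead : WIndep I (vs 0) (us 1 ++ ((List.range n).map fun i => us (i + 2)).flatten) := by
      intro b hb c hc
      simp only [List.mem_append, List.mem_flatten, List.mem_map, List.mem_range] at hc
      rcases hc with hc | ⟨_, ⟨i, hi, rfl⟩, hc⟩
      · exact hind 1 0 le_rfl (by omega) one_pos b hb c hc
      · exact hind (i + 2) 0 (by omega) (by omega) (by omega) b hb c hc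
    subst hu hv hz
    simpa only [List.flatten_map_range_succ, List.append_assoc] using
      (htail.append_left (us 1)).append_right (vs 0) hhead

namespace ScatN

lemma cons_right {n : ℕ} {u z v : List α} {b : α} (hb : WIndep I [b] u)
    (h : ScatN I n u z v) : ScatN I n u (b :: z) (b :: v) := by
  obtain ⟨us, vs, hune, hvne, hu, hv, hz, hind⟩ := h
  refine ⟨us, fun j => if j = 0 then b :: vs 0 else vs j, hune, ?_, hu, ?_, ?_, ?_⟩
  · intro j h1 h2
    simpa [Nat.pos_iff_ne_zero.1 h1] using hvne j h1 h2
  · simp [List.flatten_map_range_succ, hv]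
  · simp [hz]
  · intro i j h1 h2 hji
    dsimp only
    split_ifs with hj
    · subst hj
      refine wIndep_cons_left.2 ⟨hb.mono (.refl _) fun c hc => ?_, hind i 0 h1 h2 hji⟩
      rw [hu, List.mem_flatten]
      exact ⟨us i, List.mem_map.2 ⟨i - 1, List.mem_range.2 (by omega), by congr 1; omega⟩, hc⟩
    · exact hind i j h1 h2 hji

lemma cons_left {n : ℕ} {u z v : List α} (a : α) (h : ScatN I n u z v) :
    ∃ m, ScatN I m (a :: u) (a :: z) v := by
  obtain ⟨us, vs, hune, hvne, rfl, rfl, rfl, hind⟩ := h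
  by_cases hmerge : vs 0 = [] ∧ n ≠ 0
  · -- `a` joins the first block of `u`
    obtain ⟨hvs₀, hn⟩ := hmerge
    obtain ⟨m, rfl⟩ : ∃ m, n = m + 1 := ⟨n - 1, by omega⟩
    refine ⟨m + 1, fun | 0 => [] | 1 => a :: us 1 | k + 2 => us (k + 2), vs, ?_, hvne,
      by simp [List.flatten_map_range_succ], rfl, by simp [List.flatten_map_range_succ, hvs₀], ?_⟩
    · rintro (_ | _ | k) h1 h2
      exacts [by omega, List.cons_ne_nil _ _, hune (k + 2) (by omega) h2]
    · rintro (_ | _ | k) j h1 h2 hji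
      · omega
      · obtain rfl : j = 0 := by omega
        simp [hvs₀]
      · exact hind (k + 2) j h1 h2 hji
  · -- `a` forms a new first block, preceded by an empty block of `v`
    rw [not_and_or, not_not] at hmerge
    refine ⟨n + 1, fun | 0 => [] | 1 => [a] | k + 2 => us (k + 1),
      fun | 0 => [] | k + 1 => vs k, ?_, ?_, by simp [List.flatten_map_range_succ],
      by simp [List.flatten_map_range_succ], by simp [List.flatten_map_range_succ], ?_⟩
    · rintro (_ | _ | k) h1 h2
      exacts [by omega, List.cons_ne_nil _ _, hune (k + 1) (by omega) (by omega)]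
    · rintro (_ | _ | k) h1 h2
      · omega
      · exact hmerge.resolve_right (by omega)
      · exact hvne (k + 1) (by omega) (by omega)
    · rintro (_ | _ | i) (_ | j) h1 h2 hji
      all_goals first | omega | simp
      exact hind (i + 1) j (by omega) (by omega) (by omega)

end ScatN

lemma Scatter.exists_scatN {u z v : List α} (h : Scatter I u z v) : ∃ n, ScatN I n u z v := by
  induction h with
  | nil v =>
    exact ⟨0, fun _ => [], fun _ => v, fun _ _ _ => by omega, fun _ _ _ => by omega, by simp,
      by simp, by simp, fun _ _ _ _ => by omega⟩
  | cons_left a _ ih =>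
    obtain ⟨n, h⟩ := ih
    exact h.cons_left a
  | cons_right hb _ ih =>
    obtain ⟨n, h⟩ := ih
    exact ⟨n, h.cons_right hb⟩

lemma scat_iff_scatter {u z v : List α} : Scat I u z v ↔ Scatter I u z v :=
  ⟨fun ⟨_, h⟩ => .of_scatN h, Scatter.exists_scatN⟩

namespace Scatter

lemma extract {u z v p s : List α} {a : α} (h : Scatter I u z v) (hu : u = p ++ a :: s)
    (hs : WIndep I [a] s) :
    ∃ v₀ v₁, v = v₀ ++ v₁ ∧ Scatter I (p ++ s) z (v₀ ++ a :: v₁) ∧ WIndep I v₀ [a] := by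
  induction h generalizing p with
  | nil => simp at hu
  | @cons_left u z v b h ih =>
    rcases p with _ | ⟨c, p⟩
    · obtain ⟨rfl, rfl⟩ := List.cons_eq_cons.1 hu
      exact ⟨[], v, rfl, cons_right hs h, by simp⟩
    · rw [List.cons_append, List.cons.injEq] at hu
      obtain ⟨rfl, hu⟩ := hu
      obtain ⟨v₀, v₁, rfl, h', hv₀⟩ := ih hu
      exact ⟨v₀, v₁, rfl, cons_left _ h', hv₀⟩
  | @cons_right u z v b hb h ih =>
    obtain ⟨v₀, v₁, rfl, h', hv₀⟩ := ih hu
    subst hu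
    refine ⟨b :: v₀, v₁, rfl, cons_right (hb.mono (List.Subset.refl _) ?_) h', ?_⟩
    · intro c; simp only [List.mem_append, List.mem_cons]; tauto
    · exact wIndep_cons_left.2 ⟨hb.mono (.refl _) (by simp), hv₀⟩

lemma insert {u z v v₀ v₁ : List α} {a : α} (h : Scatter I u z v) (hv : v = v₀ ++ a :: v₁)
    (hv₀ : WIndep I v₀ [a]) :
    ∃ p s, u = p ++ s ∧ WIndep I [a] s ∧ Scatter I (p ++ a :: s) z (v₀ ++ v₁) := by
  induction h generalizing v₀ with
  | nil v =>
    subst hv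
    exact ⟨[], [], rfl, by simp, (cons_left a (nil v₁)).append_right v₀ hv₀⟩
  | @cons_left u z v b h ih =>
    obtain ⟨p, s, rfl, hs, h'⟩ := ih hv hv₀
    exact ⟨b :: p, s, rfl, hs, cons_left b h'⟩
  | @cons_right u z v b hb h ih =>
    rcases v₀ with _ | ⟨c, v₀⟩
    · obtain ⟨rfl, rfl⟩ := List.cons_eq_cons.1 hv
      exact ⟨[], u, rfl, hb, cons_left b h⟩
    · rw [List.cons_append, List.cons.injEq] at hv
      obtain ⟨rfl, hv⟩ := hv
      obtain ⟨hba, hv₀⟩ := wIndep_cons_left.1 hv₀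
      obtain ⟨p, s, rfl, hs, h'⟩ := ih hv hv₀
      refine ⟨p, s, rfl, hs, cons_right ?_ h'⟩
      simp only [wIndep_singleton_left, List.mem_append, List.mem_cons] at hb ⊢
      rintro d (hd | rfl | hd)
      exacts [hb d (.inl hd), hba b (.head _) d (.head _), hb d (.inr hd)]

end Scatter

namespace TrEq

lemma length_eq {u v : List α} (h : TrEq I u v) : u.length = v.length := by
  induction h with
  | swap => simp
  | refl => rfl
  | symm _ ih => exact ih.symm
  | trans _ _ ih₁ ih₂ => exact ih₁.trans ih₂

lemma append_right {u v : List α} (w : List α) (h : TrEq I u v) : TrEq I (u ++ w) (v ++ w) := by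
  induction h with
  | swap x y hab => simpa using swap x (y ++ w) hab
  | refl => exact refl _
  | symm _ ih => exact ih.symm
  | trans _ _ ih₁ ih₂ => exact ih₁.trans ih₂

lemma append_left {u v : List α} (w : List α) (h : TrEq I u v) : TrEq I (w ++ u) (w ++ v) := by
  induction h with
  | swap x y hab => simpa using swap (w ++ x) y hab
  | refl => exact refl _
  | symm _ ih => exact ih.symm
  | trans _ _ ih₁ ih₂ => exact ih₁.trans ih₂

lemma append_singleton_cons {s : List α} {a : α} (hs : WIndep I s [a]) :
    TrEq I (s ++ [a]) (a :: s) := by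
  induction s with
  | nil => exact refl _
  | cons b s ih =>
    obtain ⟨hba, hs⟩ := wIndep_cons_left.1 hs
    exact (ih hs).append_left [b] |>.trans (by simpa using swap [] s (hba b (.head _) a (.head _)))

end TrEq

/-- `x` contains an occurrence of `c` that is independent of everything after it, and deleting
it leaves a word trace equivalent to `w`; for symmetric `I` this says `x ∼ w ++ [c]`. -/
def MovableOcc (I : α → α → Prop) (c : α) (x w : List α) : Prop :=
  ∃ p s, x = p ++ c :: s ∧ WIndep I [c] s ∧ TrEq I w (p ++ s)

lemma MovableOcc.swap (hsym : Symmetric I) {c a b : α} {l r w : List α} (hab : I a b)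
    (h : MovableOcc I c (l ++ [a, b] ++ r) w) : MovableOcc I c (l ++ [b, a] ++ r) w := by
  obtain ⟨p, s, hx, hs, hw⟩ := h
  rw [List.append_assoc, List.append_eq_append_iff] at hx
  rcases hx with ⟨_ | ⟨a', _ | ⟨b', t⟩⟩, rfl, hr⟩ | ⟨_ | ⟨c', t⟩, rfl, hl⟩
  · -- `c` is the swapped `a`
    obtain ⟨rfl, rfl⟩ := List.cons_eq_cons.1 hr
    exact ⟨l ++ [b], r, by simp, hs.mono (.refl _) (List.subset_cons_self _ _), by simpa using hw⟩
  · -- `c` is the swapped `b`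
    simp only [List.cons_append, List.nil_append, List.cons.injEq] at hr
    obtain ⟨rfl, rfl, rfl⟩ := hr
    refine ⟨l, a :: r, by simp, ?_, by simpa using hw⟩
    simpa [wIndep_singleton_left, hsym hab] using hs
  · -- `c` lies in `r`
    simp only [List.cons_append, List.cons.injEq] at hr
    obtain ⟨rfl, rfl, rfl⟩ := hr
    exact ⟨l ++ [b, a] ++ t, s, by simp, hs, hw.trans (by simpa using TrEq.swap l (t ++ s) hab)⟩
  · -- `c` is the swapped `a`
    obtain ⟨rfl, rfl⟩ := List.cons_eq_cons.1 hl
    exact ⟨p ++ [b], r, by simp, hs.mono (.refl _) (List.subset_cons_self _ _), by simpa using hw⟩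
  · -- `c` lies in `l`
    simp only [List.cons_append, List.cons.injEq] at hl
    obtain ⟨rfl, rfl⟩ := hl
    refine ⟨p, t ++ [b, a] ++ r, by simp, hs.mono (.refl _) fun x => ?_,
      hw.trans (by simpa using TrEq.swap (p ++ t) r hab)⟩
    simp only [List.mem_append, List.mem_cons]
    tauto

lemma TrEq.movableOcc_iff (hsym : Symmetric I) {x y : List α} (h : TrEq I x y) (c : α)
    (w : List α) : MovableOcc I c x w ↔ MovableOcc I c y w := by
  induction h with
  | swap l r hab => exact ⟨.swap hsym hab, .swap hsym (hsym hab)⟩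
  | refl => rfl
  | symm _ ih => exact ih.symm
  | trans _ _ ih₁ ih₂ => exact ih₁.trans ih₂

lemma mem_rDeriv_iff_scatter {u v : List α} {L : Set (List α)} :
    v ∈ RDeriv I u L ↔ ∃ z ∈ L, ∃ u', TrEq I u u' ∧ Scatter I u' z v := by
  simp only [RDeriv, EqScat, scat_iff_scatter, Set.mem_ofPred_eq]

lemma rDeriv_nil (L : Set (List α)) : RDeriv I [] L = L := by
  ext v
  rw [mem_rDeriv_iff_scatter]
  constructor
  · rintro ⟨z, hz, u', hu', h⟩
    obtain rfl : u' = [] := List.eq_nil_of_length_eq_zero hu'.length_eq.symm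
    rwa [← h.eq_of_left_nil]
  · exact fun hv => ⟨v, hv, [], .refl _, .nil v⟩

lemma mem_rDeriv_append_singleton (hsym : Symmetric I) {u v : List α} {a : α}
    {L : Set (List α)} : v ∈ RDeriv I (u ++ [a]) L ↔
      ∃ v₀ v₁, v₀ ++ a :: v₁ ∈ RDeriv I u L ∧ v = v₀ ++ v₁ ∧ WIndep I v₀ [a] := by
  simp only [mem_rDeriv_iff_scatter]
  constructor
  · rintro ⟨z, hz, u', hu', h⟩
    obtain ⟨p, s, rfl, hs, hps⟩ :=
      (hu'.movableOcc_iff hsym a u).1 ⟨u, [], rfl, by simp, by simpa using .refl u⟩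
    obtain ⟨v₀, v₁, rfl, h', hv₀⟩ := h.extract rfl hs
    exact ⟨v₀, v₁, ⟨z, hz, p ++ s, hps, h'⟩, rfl, hv₀⟩
  · rintro ⟨v₀, v₁, ⟨z, hz, u', hu', h⟩, rfl, hv₀⟩
    obtain ⟨p, s, rfl, hs, h'⟩ := h.insert rfl hv₀
    refine ⟨z, hz, p ++ a :: s, (hu'.append_right [a]).trans ?_, h'⟩
    simpa using (TrEq.append_singleton_cons (hs.symm hsym)).append_left p

lemma mem_rDeriv_singleton (hsym : Symmetric I) {v : List α} {a : α} {L : Set (List α)} :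
    v ∈ RDeriv I [a] L ↔ ∃ v₀ v₁, v₀ ++ a :: v₁ ∈ L ∧ v = v₀ ++ v₁ ∧ WIndep I v₀ [a] := by
  simpa [rDeriv_nil] using mem_rDeriv_append_singleton hsym (u := []) (v := v) (a := a) (L := L)

lemma rDeriv_append_singleton (hsym : Symmetric I) (u : List α) (a : α) (L : Set (List α)) :
    RDeriv I (u ++ [a]) L = RDeriv I [a] (RDeriv I u L) := by
  ext v
  rw [mem_rDeriv_append_singleton hsym, mem_rDeriv_singleton hsym]

lemma rPart_nil (L : Set (List α)) : RPart I [] L = L := by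
  ext v; simp [RPart, WIndep]

lemma rPart_append (u w : List α) (L : Set (List α)) :
    RPart I (u ++ w) L = RPart I w (RPart I u L) := by
  ext v; simp only [RPart, wIndep_append_right, Set.mem_ofPred_eq]; tauto

lemma mem_matches'_rexp (hsym : Symmetric I) (a : α) (E : RegularExpression α) (v : List α) :
    v ∈ (Rexp I a E).matches' ↔ v ∈ E.matches' ∧ WIndep I v [a] := by
  induction E generalizing v with
  | zero => simp [Rexp, Language.notMem_zero]
  | epsilon => simp +contextual [Rexp, Language.mem_one, WIndep]
  | char b =>
    by_cases hab : I a b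
    · simp +contextual [Rexp, hab, matches', Language.mem_singleton, WIndep, hsym hab]
    · simp +contextual [Rexp, hab, matches', Language.mem_singleton, Language.notMem_zero, WIndep]
      exact fun _ h => hab (hsym h)
  | plus E F ihE ihF =>
    simp only [Rexp, matches', Language.mem_add, ihE, ihF]
    tauto
  | comp E F ihE ihF =>
    simp only [Rexp, matches', Language.mem_mul, ihE, ihF]
    constructor
    · rintro ⟨x, ⟨hx, hxa⟩, y, ⟨hy, hya⟩, rfl⟩
      exact ⟨⟨x, hx, y, hy, rfl⟩, wIndep_append_left.2 ⟨hxa, hya⟩⟩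
    · rintro ⟨⟨x, hx, y, hy, rfl⟩, hv⟩
      rw [wIndep_append_left] at hv
      exact ⟨x, ⟨hx, hv.1⟩, y, ⟨hy, hv.2⟩, rfl⟩
  | star E ih =>
    simp only [Rexp, matches', Language.mem_kstar, ih]
    constructor
    · rintro ⟨ws, rfl, hws⟩
      exact ⟨⟨ws, rfl, fun y hy => (hws y hy).1⟩, wIndep_flatten_left.2 fun y hy => (hws y hy).2⟩
    · rintro ⟨⟨ws, rfl, hws⟩, hv⟩
      exact ⟨ws, rfl, fun y hy => ⟨hws y hy, wIndep_flatten_left.1 hv y hy⟩⟩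

lemma mem_matches'_dexp (hsym : Symmetric I) (a : α) (E : RegularExpression α) (v : List α) :
    v ∈ (Dexp I a E).matches' ↔
      ∃ v₀ v₁, v₀ ++ a :: v₁ ∈ E.matches' ∧ v = v₀ ++ v₁ ∧ WIndep I v₀ [a] := by
  induction E generalizing v with
  | zero => simp [Dexp, Language.notMem_zero]
  | epsilon => simp [Dexp, Language.notMem_zero, Language.mem_one]
  | char b =>
    by_cases hab : a = b <;>
      simp +contextual [Dexp, hab, matches', Language.mem_singleton, Language.notMem_zero,
        Language.mem_one, List.append_eq_cons_iff]
  | plus E F ihE ihF =>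
    simp only [Dexp, matches', Language.mem_add, ihE, ihF]
    aesop
  | comp E F ihE ihF =>
    simp only [Dexp, matches', Language.mem_add, Language.mem_mul, ihE, ihF,
      mem_matches'_rexp hsym]
    constructor
    · rintro (⟨_, ⟨v₀, v₁, hE, rfl, hv₀⟩, y, hF, rfl⟩ |
        ⟨x, ⟨hE, hx⟩, _, ⟨v₀, v₁, hF, rfl, hv₀⟩, rfl⟩)
      · exact ⟨v₀, v₁ ++ y, ⟨_, hE, y, hF, by simp⟩, by simp, hv₀⟩
      · exact ⟨x ++ v₀, v₁, ⟨x, hE, _, hF, by simp⟩, by simp, by simp [hx, hv₀]⟩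
    · rintro ⟨v₀, v₁, ⟨x, hE, y, hF, hxy⟩, rfl, hv₀⟩
      rcases List.append_eq_append_cons_iff.1 hxy with ⟨x₁, rfl, rfl⟩ | ⟨y₀, rfl, rfl⟩
      · exact .inl ⟨_, ⟨v₀, x₁, hE, rfl, hv₀⟩, y, hF, by simp⟩
      · rw [wIndep_append_left] at hv₀
        exact .inr ⟨x, ⟨hE, hv₀.1⟩, _, ⟨y₀, v₁, hF, rfl, hv₀.2⟩, by simp⟩
  | star E ih =>
    simp only [Dexp, matches', Language.mem_mul, Language.mem_kstar, ih, mem_matches'_rexp hsym]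
    constructor
    · rintro ⟨_, ⟨xs, rfl, hxs⟩, _, ⟨_, ⟨v₀, v₁, hE, rfl, hv₀⟩, _, ⟨ys, rfl, hys⟩, rfl⟩, rfl⟩
      refine ⟨xs.flatten ++ v₀, v₁ ++ ys.flatten, ⟨xs ++ (v₀ ++ a :: v₁) :: ys, by simp, ?_⟩,
        by simp, ?_⟩
      · simp only [List.mem_append, List.mem_cons]
        rintro y (hy | rfl | hy)
        exacts [(hxs y hy).1, hE, hys y hy]
      · simp only [wIndep_append_left, wIndep_flatten_left]
        exact ⟨fun y hy => (hxs y hy).2, hv₀⟩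
    · rintro ⟨v₀, v₁, ⟨ws, hws, hE⟩, rfl, hv₀⟩
      obtain ⟨ws₁, w₀, w₁, ws₂, rfl, rfl, rfl⟩ := List.flatten_eq_append_cons hws.symm
      simp only [wIndep_append_left, wIndep_flatten_left] at hv₀
      simp only [List.mem_append, List.mem_cons] at hE
      refine ⟨ws₁.flatten, ⟨ws₁, rfl, fun y hy => ⟨hE y (.inl hy), hv₀.1 y hy⟩⟩, _,
        ⟨w₀ ++ w₁, ⟨w₀, w₁, hE _ (.inr (.inl rfl)), rfl, hv₀.2⟩, ws₂.flatten,
          ⟨ws₂, rfl, fun y hy => hE y (.inr (.inr hy))⟩, rfl⟩, by simp⟩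

lemma matches'_rexp (hsym : Symmetric I) (a : α) (E : RegularExpression α) :
    (Rexp I a E).matches' = RPart I [a] E.matches' :=
  Set.ext (mem_matches'_rexp hsym a E)

lemma matches'_dexp (hsym : Symmetric I) (a : α) (E : RegularExpression α) :
    (Dexp I a E).matches' = RDeriv I [a] E.matches' :=
  Set.ext fun v => (mem_matches'_dexp hsym a E v).trans (mem_rDeriv_singleton hsym).symm

lemma rexpW_append_singleton (u : List α) (a : α) (E : RegularExpression α) :
    RexpW I (u ++ [a]) E = Rexp I a (RexpW I u E) := by
  simp [RexpW]

lemma dexpW_append_singleton (u : List α) (a : α) (E : RegularExpression α) :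
    DexpW I (u ++ [a]) E = Dexp I a (DexpW I u E) := by
  simp [DexpW]

end

theorem stmt7_general {α : Type u} (I : α → α → Prop)
    (hsym : Symmetric I) (E : RegularExpression α) (u : List α) :
    (RexpW I u E).matches' = RPart I u E.matches' ∧
    (DexpW I u E).matches' = RDeriv I u E.matches' := by
  induction u using List.reverseRecOn with
  | nil => exact ⟨(rPart_nil _).symm, (rDeriv_nil _).symm⟩
  | append_singleton u a ih =>
    constructor
    · rw [rexpW_append_singleton, matches'_rexp hsym, ih.1]
      exact (rPart_append u [a] _).symm
    · rw [dexpW_append_singleton, matches'_dexp hsym, ih.2]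
      exact (rDeriv_append_singleton hsym u a _).symm

/-- ⟦R_u E⟧ = R_u ⟦E⟧ and ⟦D_u E⟧ = D^I_u ⟦E⟧. -/
theorem stmt7 {α : Type u} [Fintype α] (I : α → α → Prop)
    (hirr : Irreflexive I) (hsym : Symmetric I) (E : RegularExpression α) (u : List α) :
    (RexpW I u E).matches' = RPart I u E.matches' ∧
    (DexpW I u E).matches' = RDeriv I u E.matches' :=
  stmt7_general I hsym E u
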